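/- The set Z = {κ ∈ ℝ^m_{>0} : ∃ x ∈ ℝ^n_{>0}, C(κ ∘ x^M) = 0} is a connected subset of ℝ^m. -/

import Mathlib

/-!
Substituting `w = κ ∘ x^M` shows that `Z` is the image of the convex, hence connected, set
`(ℝ^m_{>0} ∩ ker C) × ℝ^n_{>0}` under the continuous map `(w, x) ↦ w / x^M`.
-/

open Matrix

/-- The vector of Laurent monomials with exponent vectors the columns of `M`. -/
noncomputable def monR {n m : ℕ} (M : Matrix (Fin n) (Fin m) ℤ) (h : Fin n → ℝ) :
    Fin m → ℝ :=
  fun j => ∏ i, h i ^ (M i j)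

theorem convex_setOf_forall_pos {ι 𝕜 : Type*} [Field 𝕜] [LinearOrder 𝕜]
    [IsStrictOrderedRing 𝕜] :
    Convex 𝕜 {x : ι → 𝕜 | ∀ i, 0 < x i} := by
  simpa [Set.pi] using convex_pi (s := Set.univ) fun _ _ => convex_Ioi (0 : 𝕜)

theorem monR_pos {n m : ℕ} (M : Matrix (Fin n) (Fin m) ℤ) {x : Fin n → ℝ}
    (hx : ∀ i, 0 < x i) (j : Fin m) : 0 < monR M x j :=
  Finset.prod_pos fun i _ => zpow_pos (hx i) _

theorem continuousOn_monR {n m : ℕ} (M : Matrix (Fin n) (Fin m) ℤ) :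
    ContinuousOn (monR M) {x | ∀ i, x i ≠ 0} :=
  continuousOn_pi.2 fun _ => continuousOn_finsetProd _ fun i _ =>
    (continuous_apply i).continuousOn.zpow₀ _ fun _ hx => Or.inl (hx i)

theorem setOf_exists_pos_mulVec_eq_image {s m n : ℕ}
    (C : Matrix (Fin s) (Fin m) ℝ) (M : Matrix (Fin n) (Fin m) ℤ) :
    {κ : Fin m → ℝ | (∀ j, 0 < κ j) ∧
      ∃ x : Fin n → ℝ, (∀ i, 0 < x i) ∧ C *ᵥ (κ * monR M x) = 0} =
      (fun p => p.1 / monR M p.2) ''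
        (({w | ∀ j, 0 < w j} ∩ {w | C *ᵥ w = 0}) ×ˢ {x | ∀ i, 0 < x i}) := by
  ext κ
  constructor
  · rintro ⟨hκ, x, hx, hCx⟩
    refine ⟨(κ * monR M x, x), ⟨⟨fun j => mul_pos (hκ j) (monR_pos M hx j), hCx⟩, hx⟩, ?_⟩
    funext j
    exact mul_div_cancel_right₀ _ (monR_pos M hx j).ne'
  · rintro ⟨⟨w, x⟩, ⟨⟨hw, hCw⟩, hx⟩, rfl⟩
    refine ⟨fun j => div_pos (hw j) (monR_pos M hx j), x, hx, ?_⟩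
    have hw_eq : w / monR M x * monR M x = w :=
      funext fun j => div_mul_cancel₀ _ (monR_pos M hx j).ne'
    simpa [hw_eq] using hCw

/-- The set Z of positive parameters admitting a positive steady state is a connected
subset of ℝ^m. -/
theorem Z_isPreconnected {s m n : ℕ}
    (C : Matrix (Fin s) (Fin m) ℝ) (M : Matrix (Fin n) (Fin m) ℤ) :
    IsPreconnected {κ : Fin m → ℝ | (∀ j, 0 < κ j) ∧
      ∃ x : Fin n → ℝ, (∀ i, 0 < x i) ∧ C *ᵥ (κ * monR M x) = 0} := by
  rw [setOf_exists_pos_mulVec_eq_image]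
  have hker : Convex ℝ {w : Fin m → ℝ | C *ᵥ w = 0} :=
    (LinearMap.ker C.mulVecLin).convex
  have hdomain := (convex_setOf_forall_pos.inter hker).isPreconnected.prod
    (convex_setOf_forall_pos (ι := Fin n)).isPreconnected
  refine hdomain.image _ (continuousOn_pi.2 fun j => ?_)
  exact (continuous_apply j).comp_continuousOn continuousOn_fst |>.div
    ((continuous_apply j).comp_continuousOn <|
      (continuousOn_monR M).comp continuousOn_snd fun p hp i => (hp.2 i).ne')
    fun p hp => (monR_pos M hp.2 j).ne'
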